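/- Let P ≥ 1 be an integer and c_1 = -P/(2N), so the DAFT-domain index of tap (l,q) is k_{l,q} = q + Pl. Under Assumption 1 (mutual independence of indicators with distinct delay and Doppler indices, each Bernoulli(p_d p_D)), for every DAFT-domain index k the count X_k = |{(l,q) : I_{l,q}=1, q + Pl = k}| satisfies P[X_k > M] ≤ P[B > M] for all M, where B ~ Binomial(2⌈Q/P⌉ + 1, p_d p_D). -/

import Mathlib

/-!
The taps `(l, q)` that land on a DAFT index `k` lie on the line `q + P l = k`, so they have
pairwise distinct delays and pairwise distinct Dopplers; by Assumption 1 their indicators are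
independent `Bernoulli(p_d p_D)`, and the collision count `X_k` is exactly binomial with as many
trials as there are such taps. Their Dopplers are distinct elements of `[-Q, Q]` in one residue
class mod `P`, so there are at most `2⌈Q/P⌉ + 1` of them, and the binomial tail is monotone in
the number of trials by Pascal's rule.
-/

open ProbabilityTheory MeasureTheory

/-- CCDF of `Binomial(n, p)` at `M`: `P[B > M]`. -/
noncomputable def binomCCDF (n : ℕ) (p : ℝ) (M : ℕ) : ℝ :=
  ∑ k ∈ Finset.range (n + 1),
    if M < k then (n.choose k : ℝ) * p ^ k * (1 - p) ^ (n - k) else 0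

open Finset

noncomputable def binomTerm (n : ℕ) (p : ℝ) (k : ℕ) : ℝ :=
  n.choose k * p ^ k * (1 - p) ^ (n - k)

noncomputable def binomTailGE (n : ℕ) (p : ℝ) (M : ℕ) : ℝ :=
  ∑ k ∈ range (n + 1), if M ≤ k then binomTerm n p k else 0

/-- The paper's `k_{l,q}`, for the tap `lq = (l, q)` with delay `l` and Doppler `q`. -/
def daftIndex (P : ℤ) (lq : ℤ × ℤ) : ℤ := lq.2 + P * lq.1

lemma binomTerm_nonneg {p : ℝ} (hp0 : 0 ≤ p) (hp1 : p ≤ 1) (n k : ℕ) : 0 ≤ binomTerm n p k := by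
  have : 0 ≤ 1 - p := by linarith
  unfold binomTerm
  positivity

lemma binomTerm_succ_succ (n k : ℕ) (p : ℝ) :
    binomTerm (n + 1) p (k + 1) = p * binomTerm n p k + (1 - p) * binomTerm n p (k + 1) := by
  unfold binomTerm
  rcases lt_trichotomy k n with hk | rfl | hk
  · obtain ⟨j, rfl⟩ := Nat.exists_eq_add_of_lt hk
    rw [show k + j + 1 + 1 - (k + 1) = j + 1 by omega, show k + j + 1 - k = j + 1 by omega,
      show k + j + 1 - (k + 1) = j by omega, Nat.choose_succ_succ]
    push_cast
    ring
  · simp only [Nat.choose_succ_self, Nat.choose_self, Nat.sub_self]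
    ring
  · simp [Nat.choose_eq_zero_of_lt, hk, hk.trans (Nat.lt_succ_self _)]

lemma binomCCDF_eq_sum_binomTerm (n : ℕ) (p : ℝ) (M : ℕ) :
    binomCCDF n p M = ∑ k ∈ range (n + 1), if M < k then binomTerm n p k else 0 := rfl

lemma binomCCDF_succ (n : ℕ) (p : ℝ) (M : ℕ) :
    binomCCDF (n + 1) p M = p * binomTailGE n p M + (1 - p) * binomCCDF n p M := by
  have hshift : ∑ k ∈ range (n + 1), (if M < k + 1 then binomTerm n p (k + 1) else 0)
      = binomCCDF n p M :=
    calc _ = ∑ k ∈ range (n + 2), (if M < k then binomTerm n p k else 0) := by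
          rw [sum_range_succ' _ (n + 1)]
          simp
      _ = binomCCDF n p M := by
          rw [sum_range_succ]
          simp [binomTerm, binomCCDF]
  rw [binomCCDF_eq_sum_binomTerm, sum_range_succ', ← hshift, binomTailGE, mul_sum, mul_sum,
    ← sum_add_distrib]
  simp only [Nat.not_lt_zero, if_false, add_zero, Nat.lt_succ_iff]
  refine sum_congr rfl fun k _ => ?_
  split_ifs <;> simp [binomTerm_succ_succ]

lemma binomCCDF_le_binomTailGE {p : ℝ} (hp0 : 0 ≤ p) (hp1 : p ≤ 1) (n M : ℕ) :
    binomCCDF n p M ≤ binomTailGE n p M :=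
  sum_le_sum fun k _ => by
    split_ifs <;> first | exact le_rfl | omega | exact binomTerm_nonneg hp0 hp1 n k

lemma binomCCDF_monotone {p : ℝ} (hp0 : 0 ≤ p) (hp1 : p ≤ 1) (M : ℕ) :
    Monotone fun n => binomCCDF n p M := by
  refine monotone_nat_of_le_succ fun n => ?_
  have hnonneg : 0 ≤ binomCCDF n p M :=
    sum_nonneg fun k _ => by
      split_ifs <;> first | exact le_rfl | exact binomTerm_nonneg hp0 hp1 n k
  rw [binomCCDF_succ]
  nlinarith [binomCCDF_le_binomTailGE hp0 hp1 n M]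

lemma sum_finset_card_gt_eq_binomCCDF (ι : Type*) [Fintype ι] (p : ℝ) (M : ℕ) :
    ∑ T : Finset ι, (if M < #T then p ^ #T * (1 - p) ^ (Fintype.card ι - #T) else 0)
      = binomCCDF (Fintype.card ι) p M := by
  rw [← powerset_univ, sum_powerset_apply_card
    (fun m => if M < m then p ^ m * (1 - p) ^ (Fintype.card ι - m) else 0), card_univ, binomCCDF]
  refine sum_congr rfl fun k _ => ?_
  split_ifs <;> simp [mul_assoc]

lemma setOf_filter_eq_eq_iInter {Ω ι : Type*} [Fintype ι] [DecidableEq ι] {f : ι → Ω → ℕ}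
    (hval : ∀ i ω, f i ω ≤ 1) (T : Finset ι) :
    {ω | ({i | f i ω = 1} : Finset ι) = T} = ⋂ i, f i ⁻¹' {if i ∈ T then 1 else 0} := by
  ext ω
  simp only [Set.mem_ofPred_eq, Set.mem_iInter, Set.mem_preimage, Set.mem_singleton_iff,
    Finset.ext_iff, mem_filter, mem_univ, true_and]
  refine forall_congr' fun i => ?_
  have := hval i ω
  split_ifs with h
  · simp only [h, iff_true]
  · simp only [h, iff_false]
    omega

section IndependentIndicators

variable {Ω ι : Type*} [MeasurableSpace Ω] {μ : Measure Ω} [IsProbabilityMeasure μ]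
  {f : ι → Ω → ℕ} {p : ℝ}

lemma measure_preimage_zero_eq_ofReal_one_sub {g : Ω → ℕ} (hg : Measurable g)
    (hg1 : ∀ ω, g ω ≤ 1) (hp : μ (g ⁻¹' {1}) = ENNReal.ofReal p) (hp0 : 0 ≤ p) :
    μ (g ⁻¹' {0}) = ENNReal.ofReal (1 - p) := by
  have hcompl : g ⁻¹' {0} = (g ⁻¹' {1})ᶜ := by
    ext ω
    have := hg1 ω
    simp only [Set.mem_preimage, Set.mem_singleton_iff, Set.mem_compl_iff]
    omega
  rw [hcompl, prob_compl_eq_one_sub (hg (measurableSet_singleton 1)), hp,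
    ENNReal.ofReal_sub _ hp0, ENNReal.ofReal_one]

variable [Fintype ι]

lemma measure_setOf_filter_eq (hp0 : 0 ≤ p) (hp1 : p ≤ 1)
    (hmeas : ∀ i, Measurable (f i)) (hval : ∀ i ω, f i ω ≤ 1)
    (hber : ∀ i, μ {ω | f i ω = 1} = ENNReal.ofReal p) (hindep : iIndepFun f μ) (T : Finset ι) :
    μ {ω | ({i | f i ω = 1} : Finset ι) = T}
      = ENNReal.ofReal (p ^ #T * (1 - p) ^ (Fintype.card ι - #T)) := by
  classical
  have hfactor : ∀ i, μ (f i ⁻¹' {if i ∈ T then 1 else 0})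
      = ENNReal.ofReal (if i ∈ T then p else 1 - p) := fun i => by
    split_ifs
    · exact hber i
    · exact measure_preimage_zero_eq_ofReal_one_sub (hmeas i) (hval i) (hber i) hp0
  rw [setOf_filter_eq_eq_iInter hval,
    hindep.meas_iInter fun i => ⟨_, measurableSet_singleton _, rfl⟩]
  simp_rw [hfactor]
  rw [← ENNReal.ofReal_prod_of_nonneg fun i _ => by split_ifs <;> linarith, prod_ite, prod_const,
    prod_const, filter_mem_eq_inter, univ_inter, filter_not, filter_mem_eq_inter, univ_inter,
    ← compl_eq_univ_sdiff, card_compl]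

lemma measure_card_gt_eq_binomCCDF (hp0 : 0 ≤ p) (hp1 : p ≤ 1)
    (hmeas : ∀ i, Measurable (f i)) (hval : ∀ i ω, f i ω ≤ 1)
    (hber : ∀ i, μ {ω | f i ω = 1} = ENNReal.ofReal p) (hindep : iIndepFun f μ) (M : ℕ) :
    μ {ω | M < #{i | f i ω = 1}} = ENNReal.ofReal (binomCCDF (Fintype.card ι) p M) := by
  classical
  set F : Ω → Finset ι := fun ω => {i | f i ω = 1}
  have hfibre : ∀ T, MeasurableSet (F ⁻¹' {T}) := fun T => by
    change MeasurableSet {ω | ({i | f i ω = 1} : Finset ι) = T}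
    rw [setOf_filter_eq_eq_iInter hval]
    exact .iInter fun i => hmeas i (measurableSet_singleton _)
  have hevent : {ω | M < #(F ω)} = F ⁻¹' ↑({T | M < #T} : Finset (Finset ι)) := by
    ext ω
    simp
  rw [hevent, ← sum_measure_preimage_singleton _ fun T _ => hfibre T, sum_filter,
    ← sum_finset_card_gt_eq_binomCCDF, ENNReal.ofReal_sum_of_nonneg]
  · refine sum_congr rfl fun T _ => ?_
    split_ifs
    · exact measure_setOf_filter_eq hp0 hp1 hmeas hval hber hindep T
    · simp
  · intro T _
    have : 0 ≤ 1 - p := by linarith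
    split_ifs <;> positivity

end IndependentIndicators

lemma daftIndex_modEq_snd (P : ℤ) (lq : ℤ × ℤ) : daftIndex P lq ≡ lq.2 [ZMOD P] :=
  Int.modEq_iff_dvd.mpr ⟨-lq.1, by unfold daftIndex; ring⟩

lemma fst_ne_and_snd_ne_of_daftIndex_eq {P : ℤ} (hP : P ≠ 0) {a b : ℤ × ℤ}
    (h : daftIndex P a = daftIndex P b) (hab : a ≠ b) : a.1 ≠ b.1 ∧ a.2 ≠ b.2 := by
  unfold daftIndex at h
  refine ⟨fun h1 => hab (Prod.ext h1 ?_), fun h2 => hab (Prod.ext ?_ h2)⟩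
  · rw [h1] at h
    linarith
  · exact mul_left_cancel₀ hP (by linarith)

lemma card_filter_modEq_Icc_le {a b k P : ℤ} {m : ℕ} (hP : 0 < P) (hab : b - a < P * m) :
    #{q ∈ Icc a b | q ≡ k [ZMOD P]} ≤ m := by
  calc #{q ∈ Icc a b | q ≡ k [ZMOD P]} ≤ #(Ico (0 : ℤ) m) := by
        refine card_le_card_of_injOn (fun q => (q - a) / P) (fun q hq => ?_)
          fun q hq r hr hqr => ?_
        · simp only [coe_filter, mem_Icc, Set.mem_ofPred_eq] at hq
          simp only [coe_Ico, Set.mem_Ico]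
          exact ⟨Int.ediv_nonneg (by linarith) hP.le, Int.ediv_lt_of_lt_mul hP (by linarith)⟩
        · simp only [coe_filter, mem_Icc, Set.mem_ofPred_eq] at hq hr
          have hmod : (q - a) % P = (r - a) % P := (hq.2.trans hr.2.symm).sub_right a
          have hq' := Int.mul_ediv_add_emod (q - a) P
          have hr' := Int.mul_ediv_add_emod (r - a) P
          rw [show (q - a) / P = (r - a) / P from hqr, hmod] at hq'
          linarith
    _ = m := by simp

lemma card_filter_daftIndex_eq_le (A : Finset ℤ) {Q P : ℕ} (hP : 0 < P) (k : ℤ) :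
    #{lq ∈ A ×ˢ Icc (-(Q : ℤ)) Q | daftIndex P lq = k} ≤ 2 * ((Q + P - 1) / P) + 1 := by
  have hceil : Q ≤ P * ((Q + P - 1) / P) := by
    have := Nat.div_add_mod (Q + P - 1) P
    have := Nat.mod_lt (Q + P - 1) hP
    omega
  calc #{lq ∈ A ×ˢ Icc (-(Q : ℤ)) Q | daftIndex P lq = k}
      ≤ #{q ∈ Icc (-(Q : ℤ)) Q | q ≡ k [ZMOD P]} := by
        refine card_le_card_of_injOn Prod.snd (fun lq hlq => ?_) fun a ha b hb hab => ?_
        · simp only [coe_filter, mem_product, mem_Icc, Set.mem_ofPred_eq] at hlq ⊢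
          exact ⟨hlq.1.2, hlq.2 ▸ (daftIndex_modEq_snd P lq).symm⟩
        · simp only [coe_filter, Set.mem_ofPred_eq] at ha hb
          by_contra hne
          exact (fst_ne_and_snd_ne_of_daftIndex_eq (by positivity) (ha.2.trans hb.2.symm) hne).2 hab
    _ ≤ 2 * ((Q + P - 1) / P) + 1 :=
        card_filter_modEq_Icc_le (by positivity) (by push_cast; nlinarith)

theorem assumption1_collision_ccdf_bound_general
    {Ω : Type*} [MeasurableSpace Ω] (μ : MeasureTheory.Measure Ω) [IsProbabilityMeasure μ]
    (L Q P : ℕ) (hP : 1 ≤ P) (pd pD : ℝ)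
    (hpd : 0 < pd) (hpd1 : pd < 1) (hpD : 0 < pD) (hpD1 : pD < 1)
    (I : ℤ × ℤ → Ω → ℕ)
    (hmeas : ∀ lq, Measurable (I lq))
    (hval : ∀ lq ω, I lq ω ≤ 1)
    (hber : ∀ lq ∈ (Finset.Icc (0 : ℤ) ((L : ℤ) - 1)) ×ˢ (Finset.Icc (-(Q : ℤ)) (Q : ℤ)),
      μ {ω | I lq ω = 1} = ENNReal.ofReal (pd * pD))
    (hindep : ∀ s : Finset (ℤ × ℤ),
      (∀ a ∈ s, ∀ b ∈ s, a ≠ b → a.1 ≠ b.1 ∧ a.2 ≠ b.2) →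
      iIndepFun (fun a : s => I a) μ) :
    ∀ (k : ℤ) (M : ℕ),
      μ {ω | M < (((Finset.Icc (0 : ℤ) ((L : ℤ) - 1)) ×ˢ (Finset.Icc (-(Q : ℤ)) (Q : ℤ))).filter
            (fun lq => I lq ω = 1 ∧ lq.2 + (P : ℤ) * lq.1 = k)).card}
        ≤ ENNReal.ofReal (binomCCDF (2 * ((Q + P - 1) / P) + 1) (pd * pD) M) := by
  intro k M
  set grid := (Finset.Icc (0 : ℤ) ((L : ℤ) - 1)) ×ˢ (Finset.Icc (-(Q : ℤ)) (Q : ℤ))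
  set S := grid.filter (fun lq => daftIndex P lq = k)
  have hp0 : 0 ≤ pd * pD := by positivity
  have hp1 : pd * pD ≤ 1 := by nlinarith
  have hcount : ∀ ω, #(grid.filter fun lq => I lq ω = 1 ∧ lq.2 + (P : ℤ) * lq.1 = k)
      = #{a : S | I a ω = 1} := fun ω => by
    rw [univ_eq_attach, filter_attach (fun lq => I lq ω = 1), card_map, card_attach, filter_filter]
    exact congrArg card (filter_congr fun _ _ => and_comm)
  have hdistinct : ∀ a ∈ S, ∀ b ∈ S, a ≠ b → a.1 ≠ b.1 ∧ a.2 ≠ b.2 := fun a ha b hb =>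
    fst_ne_and_snd_ne_of_daftIndex_eq (by positivity)
      ((mem_filter.mp ha).2.trans (mem_filter.mp hb).2.symm)
  simp_rw [hcount]
  rw [measure_card_gt_eq_binomCCDF hp0 hp1 (fun a : S => hmeas a)
    (fun a : S => hval a) (fun a : S => hber a (filter_subset _ _ a.2)) (hindep S hdistinct)]
  exact ENNReal.ofReal_le_ofReal <| binomCCDF_monotone hp0 hp1 M <|
    (Fintype.card_coe S).trans_le (card_filter_daftIndex_eq_le _ (by omega) k)

/-- With `P ≥ 1` and `c₁ = -P/(2N)` (DAFT-domain index `k_{l,q} = q + P·l`), under Assumption 1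
(indicators at pairwise distinct delay and Doppler indices are mutually independent, each
`Bernoulli(p_d p_D)`), for every DAFT-domain index `k` and every `M`, the collision count
`X_k = |{(l,q) : I_{l,q} = 1, q + P·l = k}|` satisfies `P[X_k > M] ≤ P[B > M]` with
`B ~ Binomial(2⌈Q/P⌉+1, p_d p_D)` (here `⌈Q/P⌉ = (Q + P - 1)/P`). -/
theorem assumption1_collision_ccdf_bound
    {Ω : Type*} [MeasurableSpace Ω] (μ : MeasureTheory.Measure Ω) [IsProbabilityMeasure μ]
    (L Q N P : ℕ) (hL : 1 ≤ L) (hQ : 1 ≤ Q) (hN : 1 ≤ N) (hP : 1 ≤ P) (pd pD : ℝ)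
    (hpd : 0 < pd) (hpd1 : pd < 1) (hpD : 0 < pD) (hpD1 : pD < 1)
    (I : ℤ × ℤ → Ω → ℕ)
    (hmeas : ∀ lq, Measurable (I lq))
    (hval : ∀ lq ω, I lq ω ≤ 1)
    (hber : ∀ lq ∈ (Finset.Icc (0 : ℤ) ((L : ℤ) - 1)) ×ˢ (Finset.Icc (-(Q : ℤ)) (Q : ℤ)),
      μ {ω | I lq ω = 1} = ENNReal.ofReal (pd * pD))
    (hindep : ∀ s : Finset (ℤ × ℤ),
      (∀ a ∈ s, ∀ b ∈ s, a ≠ b → a.1 ≠ b.1 ∧ a.2 ≠ b.2) →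
      iIndepFun (fun a : s => I a) μ) :
    ∀ (k : ℤ) (M : ℕ),
      μ {ω | M < (((Finset.Icc (0 : ℤ) ((L : ℤ) - 1)) ×ˢ (Finset.Icc (-(Q : ℤ)) (Q : ℤ))).filter
            (fun lq => I lq ω = 1 ∧ lq.2 + (P : ℤ) * lq.1 = k)).card}
        ≤ ENNReal.ofReal (binomCCDF (2 * ((Q + P - 1) / P) + 1) (pd * pD) M) :=
  assumption1_collision_ccdf_bound_general μ L Q P hP pd pD hpd hpd1 hpD hpD1 I hmeas hval hber
    hindep
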